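/- arXiv:1305.6842 — 4 statements merged into one kernel-verified Lean document; each statement's English description precedes it below -/
import Mathlib

section
/- Let S be a semigroup whose kernel is the Rees matrix semigroup K = Λ × G × I over a group G with normalized sandwich matrix P. Then for every α ∈ S there exist g_α ∈ G and maps Λ_α : Λ → Λ, I_α : I → I such that for all λ ∈ Λ, g ∈ G, i ∈ I: α·(λ,g,i) = (Λ_α(λ), g_α · P(I_α(i₀), λ) · g, i) and (λ,g,i)·α = (λ, g · P(i, Λ_α(λ₀)) · g_α, I_α(i)). -/
/-!
Because `K` is an ideal, `α` acts on `K` by left and right translations. Factoring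
`(λ, g, i) = (λ, 1, i₀)(λ₀, g, i)` shows that the left action is determined by the products
`α(λ, 1, i₀) = (Λ_α λ, a_λ, _)`, and symmetrically the right action by
`(λ₀, 1, i)α = (_, b_i, I_α i)`. Evaluating `(λ, 1, i) α (λ, 1, i)` in the two possible ways
links the two: `P(i, Λ_α λ) a_λ = b_i P(I_α i, λ)`. Normalization of `P` at `i₀` and `λ₀` then
expresses every `a_λ` and `b_i` through `g_α := b_{i₀}`.
-/

/-- Rees matrix multiplication on `Λ × G × I` with sandwich matrix `P`. -/
def reesMul {G L J : Type*} [Group G] (P : J → L → G) :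
    L × G × J → L × G × J → L × G × J :=
  fun a b => (a.1, a.2.1 * P a.2.2 b.1 * b.2.1, b.2.2)

@[simp]
theorem reesMul_mk {G L J : Type*} [Group G] (P : J → L → G) (l m : L) (g h : G) (i j : J) :
    reesMul P (l, g, i) (m, h, j) = (l, g * P i m * h, j) :=
  rfl

section Translations

variable {S G L J : Type*} [Semigroup S] [Group G] {P : J → L → G} {ι : L × G × J → S}

theorem exists_left_translation (hmul : ∀ a b, ι (reesMul P a b) = ι a * ι b)
    {l₀ : L} {i₀ : J} (hcol : ∀ i, P i l₀ = 1) {α : S}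
    (hα : ∀ l, α * ι (l, 1, i₀) ∈ Set.range ι) :
    ∃ (La : L → L) (a : L → G), ∀ l g i, α * ι (l, g, i) = ι (La l, a l * g, i) := by
  choose k hk using hα
  refine ⟨fun l => (k l).1, fun l => (k l).2.1, fun l g i => ?_⟩
  calc α * ι (l, g, i) = α * ι (l, 1, i₀) * ι (l₀, g, i) := by
        rw [mul_assoc, ← hmul, reesMul_mk, hcol]; simp
    _ = ι (reesMul P (k l) (l₀, g, i)) := by rw [← hk, hmul]
    _ = ι ((k l).1, (k l).2.1 * g, i) := by simp [reesMul, hcol]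

theorem exists_right_translation (hmul : ∀ a b, ι (reesMul P a b) = ι a * ι b)
    {l₀ : L} {i₀ : J} (hrow : ∀ l, P i₀ l = 1) {α : S}
    (hα : ∀ i, ι (l₀, 1, i) * α ∈ Set.range ι) :
    ∃ (b : J → G) (Ia : J → J), ∀ l g i, ι (l, g, i) * α = ι (l, g * b i, Ia i) := by
  choose k hk using hα
  refine ⟨fun i => (k i).2.1, fun i => (k i).2.2, fun l g i => ?_⟩
  calc ι (l, g, i) * α = ι (l, g, i₀) * (ι (l₀, 1, i) * α) := by
        rw [← mul_assoc, ← hmul, reesMul_mk, hrow]; simp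
    _ = ι (reesMul P (l, g, i₀) (k i)) := by rw [← hk, hmul]
    _ = ι (l, g * (k i).2.1, (k i).2.2) := by simp [reesMul, hrow]

theorem translations_linked (hmul : ∀ a b, ι (reesMul P a b) = ι a * ι b)
    (hinj : Function.Injective ι) {α : S} {La : L → L} {a : L → G} {b : J → G} {Ia : J → J}
    (hL : ∀ l g i, α * ι (l, g, i) = ι (La l, a l * g, i))
    (hR : ∀ l g i, ι (l, g, i) * α = ι (l, g * b i, Ia i)) (i : J) (l : L) :
    P i (La l) * a l = b i * P (Ia i) l := by
  have key : ι (l, P i (La l) * a l, i) = ι (l, b i * P (Ia i) l, i) :=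
    calc ι (l, P i (La l) * a l, i) = ι (l, 1, i) * (α * ι (l, 1, i)) := by
          rw [hL, ← hmul, reesMul_mk, one_mul, mul_one]
      _ = ι (l, 1, i) * α * ι (l, 1, i) := (mul_assoc _ _ _).symm
      _ = ι (l, b i * P (Ia i) l, i) := by
          rw [hR, ← hmul, reesMul_mk, one_mul, mul_one]
  simpa using hinj key

end Translations

theorem stmt9_general {S G L J : Type*} [Semigroup S] [Group G] (P : J → L → G)
    (l₀ : L) (i₀ : J)
    (hrow : ∀ l : L, P i₀ l = 1) (hcol : ∀ i : J, P i l₀ = 1)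
    (ι : L × G × J → S) (hinj : Function.Injective ι)
    (hmul : ∀ a b : L × G × J, ι (reesMul P a b) = ι a * ι b)
    (hideal : ∀ s : S, ∀ k : L × G × J,
      s * ι k ∈ Set.range ι ∧ ι k * s ∈ Set.range ι) :
    ∀ α : S, ∃ (gα : G) (La : L → L) (Ia : J → J),
      ∀ (l : L) (g : G) (i : J),
        α * ι (l, g, i) = ι (La l, gα * P (Ia i₀) l * g, i) ∧
        ι (l, g, i) * α = ι (l, g * P i (La l₀) * gα, Ia i) := by
  intro α
  obtain ⟨La, a, hL⟩ := exists_left_translation hmul hcol fun l => (hideal α (l, 1, i₀)).1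
  obtain ⟨b, Ia, hR⟩ := exists_right_translation hmul hrow fun i => (hideal α (l₀, 1, i)).2
  have linked := translations_linked hmul hinj hL hR
  have ha : ∀ l, a l = b i₀ * P (Ia i₀) l := by simpa [hrow] using linked i₀
  have hb : ∀ i, b i = P i (La l₀) * b i₀ := fun i => by
    simpa [hcol, ha l₀] using (linked i l₀).symm
  refine ⟨b i₀, La, Ia, fun l g i => ⟨?_, ?_⟩⟩
  · rw [hL, ha]
  · rw [hR, hb, mul_assoc]

/-- For every `α ∈ S` there exist `g_α ∈ G` and maps `Λ_α : Λ → Λ`, `I_α : I → I` such that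
`α·(λ,g,i) = (Λ_α(λ), g_α·P(I_α(i₀),λ)·g, i)` and
`(λ,g,i)·α = (λ, g·P(i,Λ_α(λ₀))·g_α, I_α(i))`. -/
theorem stmt9 {S G L J : Type*} [Semigroup S] [Group G] (P : J → L → G)
    (l₀ : L) (i₀ : J)
    (hrow : ∀ l : L, P i₀ l = 1) (hcol : ∀ i : J, P i l₀ = 1)
    (ι : L × G × J → S) (hinj : Function.Injective ι)
    (hmul : ∀ a b : L × G × J, ι (reesMul P a b) = ι a * ι b)
    (hideal : ∀ s : S, ∀ k : L × G × J,
      s * ι k ∈ Set.range ι ∧ ι k * s ∈ Set.range ι)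
    (hmin : ∀ T : Set S, T.Nonempty →
      (∀ s : S, ∀ a ∈ T, s * a ∈ T ∧ a * s ∈ T) → Set.range ι ⊆ T) :
    ∀ α : S, ∃ (gα : G) (La : L → L) (Ia : J → J),
      ∀ (l : L) (g : G) (i : J),
        α * ι (l, g, i) = ι (La l, gα * P (Ia i₀) l * g, i) ∧
        ι (l, g, i) * α = ι (l, g * P i (La l₀) * gα, Ia i) :=
  stmt9_general P l₀ i₀ hrow hcol ι hinj hmul hideal
end

section
/- Let S = Λ × G × I be a Rees matrix semigroup over a group G with normalized sandwich matrix P whose rows are pairwise distinct as functions Λ → G (nonsingular in rows). Suppose α, β ∈ S act on S with α(λ,g,i) = (Λ_α(λ), g_α g', i)-type translations where the data (g_α, Λ_α) ≠ (g_β, Λ_β) at some λ. Then there exist elements u, v ∈ S with u·α·v ≠ u·β·v, where u ∈ {λ₀}×G×I and v ∈ Λ×G×{i₀}; in particular, a product of the form (λ₀,1,i)·x·(λ,1,i₀) separates α and β and its values lie in Γ = {λ₀}×G×{i₀}. -/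
section Translations

variable {S G L J : Type*} [Semigroup S] [Group G] {P : J → L → G}

theorem eq_of_forall_sandwich_mul_eq {i₀ : J} (hrow : ∀ l : L, P i₀ l = 1)
    (hnscol : ∀ l m : L, (∀ i : J, P i l = P i m) → l = m)
    {gα gβ : G} {Lα Lβ : L → L} (h : ∀ i l, P i (Lα l) * gα = P i (Lβ l) * gβ) (l₀ : L) :
    gα = gβ ∧ Lα = Lβ := by
  have hg : gα = gβ := by simpa only [hrow, one_mul] using h i₀ l₀
  subst hg
  exact ⟨rfl, funext fun l => hnscol _ _ fun i => mul_right_cancel (h i l)⟩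

theorem mul_mul_eq_sandwich {ι : L × G × J → S}
    (hmul : ∀ a b : L × G × J, ι (reesMul P a b) = ι a * ι b)
    {α : S} {gα : G} {Lα : L → L}
    (hα : ∀ (l : L) (g : G) (i : J), α * ι (l, g, i) = ι (Lα l, gα * g, i))
    (l' l : L) (i j : J) :
    ι (l', 1, i) * α * ι (l, 1, j) = ι (l', P i (Lα l) * gα, j) := by
  rw [mul_assoc, hα, ← hmul]
  simp only [reesMul, one_mul, mul_one]

end Translations

theorem stmt15_general {S G L J : Type*} [Semigroup S] [Group G] (P : J → L → G)
    (l₀ : L) (i₀ : J)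
    (hrow : ∀ l : L, P i₀ l = 1)
    (hnscol : ∀ l m : L, (∀ i : J, P i l = P i m) → l = m)
    (ι : L × G × J → S) (hinj : Function.Injective ι)
    (hmul : ∀ a b : L × G × J, ι (reesMul P a b) = ι a * ι b)
    (α β : S) (gα gβ : G) (Lα Lβ : L → L)
    (hα : ∀ (l : L) (g : G) (i : J), α * ι (l, g, i) = ι (Lα l, gα * g, i))
    (hβ : ∀ (l : L) (g : G) (i : J), β * ι (l, g, i) = ι (Lβ l, gβ * g, i))
    (hdiff : gα ≠ gβ ∨ ∃ l : L, Lα l ≠ Lβ l) :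
    ∃ (i : J) (l : L),
      ι (l₀, 1, i) * α * ι (l, 1, i₀) ≠ ι (l₀, 1, i) * β * ι (l, 1, i₀) ∧
      (∃ g : G, ι (l₀, 1, i) * α * ι (l, 1, i₀) = ι (l₀, g, i₀)) ∧
      (∃ g : G, ι (l₀, 1, i) * β * ι (l, 1, i₀) = ι (l₀, g, i₀)) := by
  obtain ⟨i, l, hne⟩ : ∃ i l, P i (Lα l) * gα ≠ P i (Lβ l) * gβ := by
    by_contra! h
    obtain ⟨rfl, rfl⟩ := eq_of_forall_sandwich_mul_eq hrow hnscol h l₀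
    simp at hdiff
  have eα := mul_mul_eq_sandwich hmul hα l₀ l i i₀
  have eβ := mul_mul_eq_sandwich hmul hβ l₀ l i i₀
  refine ⟨i, l, ?_, ⟨_, eα⟩, ⟨_, eβ⟩⟩
  rw [eα, eβ]
  exact hinj.ne fun h => hne (Prod.ext_iff.mp (Prod.ext_iff.mp h).2).1

/-- If the sandwich matrix `P` is nonsingular and `α, β` induce different translation data
`(g_α, Λ_α) ≠ (g_β, Λ_β)` on the kernel, then a product of the form
`(λ₀,1,i)·x·(λ,1,i₀)` separates `α` and `β` and its values lie in `Γ = {λ₀}×G×{i₀}`. -/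
theorem stmt15 {S G L J : Type*} [Semigroup S] [Group G] (P : J → L → G)
    (l₀ : L) (i₀ : J)
    (hrow : ∀ l : L, P i₀ l = 1) (hcol : ∀ i : J, P i l₀ = 1)
    (hnsrow : ∀ i j : J, (∀ l : L, P i l = P j l) → i = j)
    (hnscol : ∀ l m : L, (∀ i : J, P i l = P i m) → l = m)
    (ι : L × G × J → S) (hinj : Function.Injective ι)
    (hmul : ∀ a b : L × G × J, ι (reesMul P a b) = ι a * ι b)
    (hideal : ∀ s : S, ∀ k : L × G × J,
      s * ι k ∈ Set.range ι ∧ ι k * s ∈ Set.range ι)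
    (α β : S) (gα gβ : G) (Lα Lβ : L → L)
    (hα : ∀ (l : L) (g : G) (i : J), α * ι (l, g, i) = ι (Lα l, gα * g, i))
    (hβ : ∀ (l : L) (g : G) (i : J), β * ι (l, g, i) = ι (Lβ l, gβ * g, i))
    (hdiff : gα ≠ gβ ∨ ∃ l : L, Lα l ≠ Lβ l) :
    ∃ (i : J) (l : L),
      ι (l₀, 1, i) * α * ι (l, 1, i₀) ≠ ι (l₀, 1, i) * β * ι (l, 1, i₀) ∧
      (∃ g : G, ι (l₀, 1, i) * α * ι (l, 1, i₀) = ι (l₀, g, i₀)) ∧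
      (∃ g : G, ι (l₀, 1, i) * β * ι (l, 1, i₀) = ι (l₀, g, i₀)) :=
  stmt15_general P l₀ i₀ hrow hnscol ι hinj hmul α β gα gβ Lα Lβ hα hβ hdiff
end

section
/- Let S be a semigroup with a two-sided ideal I containing at least two elements, and suppose for every 4-tuple P = (p₁,p₂,p₃,p₄) ∈ S⁴ with p₁ ≠ p₂ and p₃ ≠ p₄ there is a pair of terms (t_P, s_P) in variables x₁,…,x₄ with constants in S such that t_P = s_P holds at every point of M = {(x₁,x₂,x₃,x₄) : x₁ = x₂ or x₃ = x₄} but fails at P. If there exist distinct α, β ∈ S with αx = βx and xα = xβ for all x ∈ I, then one of these equations t_P = s_P, for P = (α,β,r₁,r₂) with distinct r₁, r₂ ∈ I, both holds and fails at P — a contradiction. Hence: if such α ≠ β exist, then M is not the solution set of any system of equations over S. -/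
/-- A term over `S` in `n` variables: a nonempty list of factors, each a variable or constant. -/
structure SemigroupTerm (S : Type*) (n : ℕ) where
  head : Fin n ⊕ S
  tail : List (Fin n ⊕ S)

/-- Left-to-right product of a nonempty list in a semigroup. -/
def prodList {S : Type*} [Semigroup S] : S → List S → S
  | a, [] => a
  | a, b :: l => prodList (a * b) l

/-- Evaluation of a term at a point `X`. -/
def SemigroupTerm.eval {S : Type*} [Semigroup S] {n : ℕ}
    (t : SemigroupTerm S n) (X : Fin n → S) : S :=
  prodList (Sum.elim X id t.head) (t.tail.map (Sum.elim X id))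

/-!
Call `a` and `b` `I`-equivalent when `a * x = b * x` and `x * a = x * b` for all `x ∈ I`. Since `I`
is an ideal this is a congruence, and a product having a factor in `I` does not change when the
other factors are replaced by `I`-equivalent ones.

Let `P = (α, β, r₁, r₂) ∉ M`, and let `Q = (α, β, r₁, r₁)`, `B = (β, β, r₁, r₂)`,
`B' = (β, β, r₁, r₁)`, which lie in `M`. A term containing `x₄` takes equal values at `P` and `B`
and at `Q` and `B'`. A term not containing `x₄` takes equal values at `P` and `Q` and at `B` and
`B'`. In all four cases, an equation that holds at `Q`, `B` and `B'` also holds at `P`.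
-/

section IdealEquiv

variable {S : Type*} [Semigroup S]

def IdealEquiv (I : Set S) (a b : S) : Prop :=
  ∀ x ∈ I, a * x = b * x ∧ x * a = x * b

theorem IdealEquiv.refl (I : Set S) (a : S) : IdealEquiv I a a :=
  fun _ _ => ⟨rfl, rfl⟩

theorem IdealEquiv.mul {I : Set S} (hI : ∀ s : S, ∀ a ∈ I, s * a ∈ I ∧ a * s ∈ I) {a b c d : S}
    (hab : IdealEquiv I a b) (hcd : IdealEquiv I c d) : IdealEquiv I (a * c) (b * d) := by
  intro x hx
  constructor
  · calc a * c * x = a * (c * x) := mul_assoc ..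
      _ = b * (c * x) := (hab _ (hI c x hx).1).1
      _ = b * (d * x) := by rw [(hcd x hx).1]
      _ = b * d * x := (mul_assoc ..).symm
  · calc x * (a * c) = x * a * c := (mul_assoc ..).symm
      _ = x * b * c := by rw [(hab x hx).2]
      _ = x * b * d := (hcd _ (hI b x hx).2).2
      _ = x * (b * d) := mul_assoc ..

/-- The first alternative of `hanchor` is the induction invariant: once the running product is a
common element of `I`, all remaining factors can be exchanged. -/
theorem prodList_map_eq_of_idealEquiv {ι : Type*} {I : Set S}
    (hI : ∀ s : S, ∀ a ∈ I, s * a ∈ I ∧ a * s ∈ I) {v w : ι → S}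
    (hvw : ∀ i, IdealEquiv I (v i) (w i)) {L : List ι} {a b : S} (hab : IdealEquiv I a b)
    (hanchor : (a = b ∧ a ∈ I) ∨ ∃ k ∈ L, v k = w k ∧ v k ∈ I) :
    prodList a (L.map v) = prodList b (L.map w) := by
  induction L generalizing a b with
  | nil =>
    obtain ⟨rfl, -⟩ | ⟨k, hk, -⟩ := hanchor
    · rfl
    · simp at hk
  | cons k L ih =>
    refine ih (hab.mul hI (hvw k)) ?_
    rcases hanchor with ⟨rfl, ha⟩ | ⟨k', hk', hvwk', hk'I⟩
    · exact .inl ⟨(hvw k a ha).2, (hI (v k) a ha).2⟩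
    · rcases List.mem_cons.1 hk' with rfl | hk'
      · exact .inl ⟨(hab _ hk'I).1.trans (by rw [hvwk']), (hI a _ hk'I).1⟩
      · exact .inr ⟨k', hk', hvwk', hk'I⟩

end IdealEquiv

namespace SemigroupTerm

variable {S : Type*} [Semigroup S] {n : ℕ}

def vars (T : SemigroupTerm S n) : Set (Fin n) :=
  {k | Sum.inl k ∈ T.head :: T.tail}

theorem eval_congr {T : SemigroupTerm S n} {X X' : Fin n → S}
    (h : ∀ k ∈ T.vars, X k = X' k) : T.eval X = T.eval X' := by
  have hfactor : ∀ f ∈ T.head :: T.tail, Sum.elim X id f = Sum.elim X' id f := by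
    rintro (k | c) hf
    · exact h k hf
    · rfl
  unfold eval
  rw [hfactor _ List.mem_cons_self,
    List.map_congr_left fun f hf => hfactor f (List.mem_cons_of_mem _ hf)]

theorem eval_eq_of_idealEquiv {I : Set S} (hI : ∀ s : S, ∀ a ∈ I, s * a ∈ I ∧ a * s ∈ I)
    {T : SemigroupTerm S n} {X X' : Fin n → S} (hX : ∀ i, IdealEquiv I (X i) (X' i))
    {k : Fin n} (hk : k ∈ T.vars) (hXk : X k = X' k) (hkI : X k ∈ I) :
    T.eval X = T.eval X' := by
  have hfactor : ∀ f, IdealEquiv I (Sum.elim X id f) (Sum.elim X' id f) := by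
    rintro (i | c)
    · exact hX i
    · exact .refl I c
  refine prodList_map_eq_of_idealEquiv hI hfactor (hfactor _) ?_
  rcases List.mem_cons.1 hk with h | h
  · exact .inl (h ▸ ⟨hXk, hkI⟩)
  · exact .inr ⟨_, h, hXk, hkI⟩

theorem eval_square {I : Set S} (hI : ∀ s : S, ∀ a ∈ I, s * a ∈ I ∧ a * s ∈ I)
    {α β r₁ r₂ : S} (hαβ : IdealEquiv I α β) (hr₁ : r₁ ∈ I) (hr₂ : r₂ ∈ I)
    (T : SemigroupTerm S 4) :
    (T.eval ![α, β, r₁, r₂] = T.eval ![β, β, r₁, r₂] ∧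
        T.eval ![α, β, r₁, r₁] = T.eval ![β, β, r₁, r₁]) ∨
      (T.eval ![α, β, r₁, r₂] = T.eval ![α, β, r₁, r₁] ∧
        T.eval ![β, β, r₁, r₂] = T.eval ![β, β, r₁, r₁]) := by
  by_cases h3 : 3 ∈ T.vars
  · have hequiv : ∀ r i, IdealEquiv I (![α, β, r₁, r] i) (![β, β, r₁, r] i) := by
      intro r i
      fin_cases i
      exacts [hαβ, .refl I β, .refl I r₁, .refl I r]
    exact .inl ⟨eval_eq_of_idealEquiv hI (hequiv r₂) h3 rfl hr₂,
      eval_eq_of_idealEquiv hI (hequiv r₁) h3 rfl hr₁⟩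
  · have hagree : ∀ a b : S, ∀ k ∈ T.vars, ![a, b, r₁, r₂] k = ![a, b, r₁, r₁] k := by
      intro a b k hk
      fin_cases k
      · rfl
      · rfl
      · rfl
      · exact absurd hk h3
    exact .inr ⟨eval_congr (hagree α β), eval_congr (hagree β β)⟩

end SemigroupTerm

theorem eq_at_corner_of_square {A B : Type*} (f g : A → B) {p q b c : A}
    (hq : f q = g q) (hb : f b = g b) (hc : f c = g c)
    (hf : (f p = f b ∧ f q = f c) ∨ (f p = f q ∧ f b = f c))
    (hg : (g p = g b ∧ g q = g c) ∨ (g p = g q ∧ g b = g c)) :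
    f p = g p := by
  grind

/-- If a semigroup `S` has an ideal `I` with at least two elements and two distinct
`I`-equivalent elements `α ≠ β`, then the set
`M = {(x₁,x₂,x₃,x₄) : x₁ = x₂ or x₃ = x₄}` is not the solution set of any system of
equations over `S`. -/
theorem stmt16 {S : Type*} [Semigroup S] (I : Set S)
    (hI : ∀ s : S, ∀ a ∈ I, s * a ∈ I ∧ a * s ∈ I)
    (r₁ r₂ : S) (hr₁ : r₁ ∈ I) (hr₂ : r₂ ∈ I) (hrr : r₁ ≠ r₂)
    (α β : S) (hab : α ≠ β)
    (hsim : ∀ x ∈ I, α * x = β * x ∧ x * α = x * β) :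
    ¬∃ (ι : Type) (t s : ι → SemigroupTerm S 4),
      ∀ X : Fin 4 → S,
        (∀ j : ι, (t j).eval X = (s j).eval X) ↔ (X 0 = X 1 ∨ X 2 = X 3) := by
  rintro ⟨ι, t, s, hsol⟩
  obtain ⟨j, hj⟩ : ∃ j, (t j).eval ![α, β, r₁, r₂] ≠ (s j).eval ![α, β, r₁, r₂] := by
    by_contra! hall
    rcases (hsol _).1 hall with h | h
    exacts [hab h, hrr h]
  have hM : ∀ X : Fin 4 → S, X 0 = X 1 ∨ X 2 = X 3 → (t j).eval X = (s j).eval X :=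
    fun X hX => (hsol X).2 hX j
  exact hj (eq_at_corner_of_square (t j).eval (s j).eval (hM _ (.inr rfl)) (hM _ (.inl rfl))
    (hM _ (.inl rfl)) ((t j).eval_square hI hsim hr₁ hr₂) ((s j).eval_square hI hsim hr₁ hr₂))
end

section
/- Let S be a finite semigroup whose kernel K is a group (i.e., S is a homogroup) and suppose S ≠ K. Then there exist distinct α, β ∈ S with αx = βx and xα = xβ for all x ∈ K, OR the set M = {(x₁,x₂,x₃,x₄) ∈ S⁴ : x₁ = x₂ or x₃ = x₄} fails to be an algebraic set. (Equivalently: a homogroup which is an equational domain and has trivial relation ∼_K must equal its kernel, i.e., be a group.) -/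
/-! Suppose every two `∼_K`-equivalent elements coincide, and let `b ∉ K`. Since `x ∼_K y` as soon
as `xe = ye` and `ex = ey`, it suffices to push `b` into the group `K` by multiplying with `e`.
By finiteness `b^i b^m = b^i` for some `i, m ≥ 1`; multiplying by `e` and cancelling in `K` gives
`b^m e = e = e b^m`, so `b^m ∼_K e` and hence `b^m = e`. Then `be = b^{m+1} = eb`, so `b ∼_K be`,
whence `b = be ∈ K`. -/

structure IsGroupIdeal {S : Type*} [Semigroup S] (K : Set S) (e : S) : Prop where
  mul_mem : ∀ s : S, ∀ a ∈ K, s * a ∈ K ∧ a * s ∈ K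
  one_mem : e ∈ K
  one_mul_mul_one : ∀ k ∈ K, e * k = k ∧ k * e = k
  exists_inv : ∀ k ∈ K, ∃ k' ∈ K, k * k' = e ∧ k' * k = e

/-- The relation `∼_K`. -/
def KEquiv {S : Type*} [Mul S] (K : Set S) (α β : S) : Prop :=
  ∀ x ∈ K, α * x = β * x ∧ x * α = x * β

/-- `powSucc b n = b ^ (n + 1)`. -/
def powSucc {S : Type*} [Semigroup S] (b : S) : ℕ → S
  | 0 => b
  | n + 1 => powSucc b n * b

section

variable {S : Type*} [Semigroup S]

theorem powSucc_add (b : S) (m n : ℕ) : powSucc b (m + n + 1) = powSucc b m * powSucc b n := by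
  induction n with
  | zero => rfl
  | succ n ih =>
    change powSucc b (m + n + 1) * b = powSucc b m * (powSucc b n * b)
    rw [ih, mul_assoc]

theorem exists_powSucc_mul_eq_self [Finite S] (b : S) :
    ∃ i m : ℕ, powSucc b i * powSucc b m = powSucc b i := by
  obtain ⟨i, j, hij, heq⟩ := Finite.exists_ne_map_eq_of_infinite (powSucc b)
  rcases Nat.lt_or_gt_of_ne hij with hlt | hlt
  · refine ⟨i, j - i - 1, ?_⟩
    rw [← powSucc_add, heq]
    congr 1
    omega
  · refine ⟨j, i - j - 1, ?_⟩
    rw [← powSucc_add, ← heq]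
    congr 1
    omega

variable {K : Set S} {e : S}

theorem kEquiv_of_mul_eq (hid : ∀ k ∈ K, e * k = k ∧ k * e = k) {α β : S}
    (hr : α * e = β * e) (hl : e * α = e * β) : KEquiv K α β := by
  intro x hx
  constructor
  · rw [← (hid x hx).1, ← mul_assoc, hr, mul_assoc]
  · rw [← (hid x hx).2, mul_assoc, hl, ← mul_assoc]

theorem eq_of_mul_eq_left (hid : ∀ k ∈ K, e * k = k ∧ k * e = k)
    (hinv : ∀ k ∈ K, ∃ k' ∈ K, k * k' = e ∧ k' * k = e) {k m : S} (hk : k ∈ K) (hm : m ∈ K)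
    (h : k * m = k) : m = e := by
  obtain ⟨k', -, -, hk'k⟩ := hinv k hk
  calc m = k' * k * m := by rw [hk'k, (hid m hm).1]
    _ = e := by rw [mul_assoc, h, hk'k]

theorem mul_mul_eq_mul_mul_mul_right (hid : ∀ k ∈ K, e * k = k ∧ k * e = k) {v : S}
    (hv : v * e ∈ K) (u : S) :
    u * v * e = u * e * (v * e) := by
  rw [mul_assoc, mul_assoc, (hid _ hv).1]

theorem mul_mul_eq_mul_mul_mul_left (hid : ∀ k ∈ K, e * k = k ∧ k * e = k) {u : S}
    (hu : e * u ∈ K) (v : S) :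
    e * (u * v) = e * u * (e * v) := by
  rw [← mul_assoc, ← mul_assoc, (hid _ hu).2]

theorem IsGroupIdeal.eq_univ_of_forall_kEquiv_eq [Finite S] (hK : IsGroupIdeal K e)
    (htriv : ∀ α β : S, KEquiv K α β → α = β) : K = Set.univ := by
  refine Set.eq_univ_of_forall fun b => ?_
  have hid := hK.one_mul_mul_one
  have hre (s : S) : s * e ∈ K := (hK.mul_mem s e hK.one_mem).1
  have hle (s : S) : e * s ∈ K := (hK.mul_mem s e hK.one_mem).2
  have hee : e * e = e := (hid e hK.one_mem).1
  obtain ⟨i, m, hpow⟩ := exists_powSucc_mul_eq_self b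
  have hde : powSucc b m * e = e :=
    eq_of_mul_eq_left hid hK.exists_inv (hre _) (hre _) <| by
      rw [← mul_mul_eq_mul_mul_mul_right hid (hre _), hpow]
  have hed : e * powSucc b m = e :=
    eq_of_mul_eq_left hid hK.exists_inv (hle _) (hle _) <| by
      rw [← mul_mul_eq_mul_mul_mul_left hid (hle _), hpow]
  have hpow_eq : powSucc b m = e :=
    htriv _ _ <| kEquiv_of_mul_eq hid (by rw [hde, hee]) (by rw [hed, hee])
  have hcomm : b * e = e * b := by
    rw [← hpow_eq]
    calc b * powSucc b m = powSucc b (0 + m + 1) := (powSucc_add b 0 m).symm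
      _ = powSucc b m * b := by rw [Nat.zero_add]; rfl
  have hb : b = b * e := htriv _ _ <| kEquiv_of_mul_eq hid
    (by rw [mul_assoc, hee]) (by rw [hcomm, ← mul_assoc, hee])
  exact hb ▸ hre b

end

theorem stmt19_general {S : Type*} [Semigroup S] [Finite S] (K : Set S)
    (hK : ∀ s : S, ∀ a ∈ K, s * a ∈ K ∧ a * s ∈ K)
    (e : S) (he : e ∈ K)
    (hid : ∀ k ∈ K, e * k = k ∧ k * e = k)
    (hinv : ∀ k ∈ K, ∃ k' ∈ K, k * k' = e ∧ k' * k = e)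
    (hne : K ≠ Set.univ) :
    (∃ α β : S, α ≠ β ∧ ∀ x ∈ K, α * x = β * x ∧ x * α = x * β) ∨
    ¬∃ (ι : Type) (t s : ι → SemigroupTerm S 4),
      ∀ X : Fin 4 → S,
        (∀ j : ι, (t j).eval X = (s j).eval X) ↔ (X 0 = X 1 ∨ X 2 = X 3) := by
  left
  by_contra hcon
  have htriv (α β : S) (h : KEquiv K α β) : α = β := by_contra fun hαβ => hcon ⟨α, β, hαβ, h⟩
  exact hne <| (IsGroupIdeal.mk hK he hid hinv).eq_univ_of_forall_kEquiv_eq htriv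

/-- A finite homogroup (semigroup whose kernel `K` is a group) with `S ≠ K` either has two
distinct `K`-equivalent elements, or the set `M = {(x₁,x₂,x₃,x₄) : x₁ = x₂ or x₃ = x₄}`
fails to be algebraic. -/
theorem stmt19 {S : Type*} [Semigroup S] [Finite S] (K : Set S)
    (hK : ∀ s : S, ∀ a ∈ K, s * a ∈ K ∧ a * s ∈ K)
    (hKne : K.Nonempty)
    (hmin : ∀ T : Set S, T.Nonempty →
      (∀ s : S, ∀ a ∈ T, s * a ∈ T ∧ a * s ∈ T) → K ⊆ T)
    (e : S) (he : e ∈ K)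
    (hid : ∀ k ∈ K, e * k = k ∧ k * e = k)
    (hinv : ∀ k ∈ K, ∃ k' ∈ K, k * k' = e ∧ k' * k = e)
    (hne : K ≠ Set.univ) :
    (∃ α β : S, α ≠ β ∧ ∀ x ∈ K, α * x = β * x ∧ x * α = x * β) ∨
    ¬∃ (ι : Type) (t s : ι → SemigroupTerm S 4),
      ∀ X : Fin 4 → S,
        (∀ j : ι, (t j).eval X = (s j).eval X) ↔ (X 0 = X 1 ∨ X 2 = X 3) :=
  stmt19_general K hK e he hid hinv hne
end
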